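/- Let x^o = (D^T D)^{-1} D^T y be the least-squares solution for the model y ≈ D x with D = [W Z], and partition x^o = col{x_W^o, x_Z^o} with x_W^o ∈ R^P. Then W x_W^o = E_WZ y, where E_WZ = W (W^T P_Z^perp W)^{-1} W^T P_Z^perp. -/

import Mathlib

/-!
The least-squares solution `x = (x_W, x_Z)` satisfies the normal equations, i.e. its residual
`r = y - W x_W - Z x_Z` is orthogonal to `W` and to `Z`. Orthogonality to `Z` gives
`P_Z^⊥ r = r`, and `P_Z^⊥ Z = 0` since `Zᵀ Z = 1`; hence `Wᵀ P_Z^⊥ (y - W x_W) = Wᵀ r = 0`,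
so `x_W` solves the reduced normal equations `(Wᵀ P_Z^⊥ W) x_W = Wᵀ P_Z^⊥ y`.
-/

open Matrix

namespace Matrix

variable {R : Type*} [CommRing R] {m n k : Type*} [Fintype m] [Fintype n] [Fintype k]

noncomputable def leastSquares [DecidableEq n] (D : Matrix m n R) (y : m → R) : n → R :=
  ((Dᵀ * D)⁻¹ * Dᵀ) *ᵥ y

theorem transpose_mulVec_sub_mulVec_leastSquares [DecidableEq n] {D : Matrix m n R}
    (hD : IsUnit (Dᵀ * D)) (y : m → R) :
    Dᵀ *ᵥ (y - D *ᵥ leastSquares D y) = 0 := by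
  rw [mulVec_sub, leastSquares, mulVec_mulVec, mulVec_mulVec,
    mul_nonsing_inv_cancel_left _ _ ((isUnit_iff_isUnit_det _).mp hD), sub_self]

theorem eq_inv_mul_mulVec_of_mulVec_eq [DecidableEq n] {S : Matrix n n R} (hS : IsUnit S)
    {B : Matrix n m R} {u : n → R} {y : m → R} (h : S *ᵥ u = B *ᵥ y) :
    u = (S⁻¹ * B) *ᵥ y := by
  rw [← mulVec_mulVec, ← h, mulVec_mulVec,
    nonsing_inv_mul _ ((isUnit_iff_isUnit_det _).mp hS), one_mulVec]

variable [DecidableEq m]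

theorem one_sub_mul_transpose_mulVec_of_transpose_mulVec_eq_zero (Z : Matrix m k R)
    {r : m → R} (hr : Zᵀ *ᵥ r = 0) : (1 - Z * Zᵀ) *ᵥ r = r := by
  rw [sub_mulVec, one_mulVec, ← mulVec_mulVec, hr, mulVec_zero, sub_zero]

variable [DecidableEq k]

theorem one_sub_mul_transpose_mul_self {Z : Matrix m k R} (hZ : Zᵀ * Z = 1) :
    (1 - Z * Zᵀ) * Z = 0 := by
  rw [Matrix.sub_mul, Matrix.one_mul, Matrix.mul_assoc, hZ, Matrix.mul_one, sub_self]

theorem reduced_normal_equations {W : Matrix m n R} {Z : Matrix m k R} (hZ : Zᵀ * Z = 1)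
    {u : n → R} {v : k → R} {y : m → R}
    (hWr : Wᵀ *ᵥ (y - W *ᵥ u - Z *ᵥ v) = 0) (hZr : Zᵀ *ᵥ (y - W *ᵥ u - Z *ᵥ v) = 0) :
    (Wᵀ * (1 - Z * Zᵀ) * W) *ᵥ u = (Wᵀ * (1 - Z * Zᵀ)) *ᵥ y := by
  set r := y - W *ᵥ u - Z *ᵥ v
  have hPr : (1 - Z * Zᵀ) *ᵥ (y - W *ᵥ u) = r := by
    rw [show y - W *ᵥ u = r + Z *ᵥ v by simp only [r, sub_add_cancel], mulVec_add,
      one_sub_mul_transpose_mulVec_of_transpose_mulVec_eq_zero Z hZr, mulVec_mulVec,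
      one_sub_mul_transpose_mul_self hZ, zero_mulVec, add_zero]
  have h : (Wᵀ * (1 - Z * Zᵀ)) *ᵥ y - (Wᵀ * (1 - Z * Zᵀ) * W) *ᵥ u = 0 := by
    rw [← mulVec_mulVec u, ← mulVec_sub, ← mulVec_mulVec, hPr, hWr]
  exact (sub_eq_zero.mp h).symm

theorem reduced_normal_equations_leastSquares_fromCols [DecidableEq n]
    {W : Matrix m n R} {Z : Matrix m k R} (hZ : Zᵀ * Z = 1)
    (hD : IsUnit ((fromCols W Z)ᵀ * fromCols W Z)) (y : m → R) :
    (Wᵀ * (1 - Z * Zᵀ) * W) *ᵥ (leastSquares (fromCols W Z) y ∘ Sum.inl) =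
      (Wᵀ * (1 - Z * Zᵀ)) *ᵥ y := by
  have h := transpose_mulVec_sub_mulVec_leastSquares hD y
  rw [transpose_fromCols, fromRows_mulVec, fromCols_mulVec, ← sub_sub] at h
  exact reduced_normal_equations hZ (funext (congrFun h <| Sum.inl ·))
    (funext (congrFun h <| Sum.inr ·))

end Matrix

theorem least_squares_oblique_projection_general {N P L : ℕ}
    (W : Matrix (Fin N) (Fin P) ℝ) (Z : Matrix (Fin N) (Fin L) ℝ)
    (hZ : Zᵀ * Z = 1)
    (hD : IsUnit ((fromCols W Z)ᵀ * fromCols W Z))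
    (hY : IsUnit (Wᵀ * (1 - Z * Zᵀ) * W))
    (y : Fin N → ℝ) :
    W.mulVec (fun p : Fin P =>
        (((fromCols W Z)ᵀ * fromCols W Z)⁻¹ * (fromCols W Z)ᵀ).mulVec y (Sum.inl p)) =
      (W * (Wᵀ * (1 - Z * Zᵀ) * W)⁻¹ * Wᵀ * (1 - Z * Zᵀ)).mulVec y := by
  change W *ᵥ (leastSquares (fromCols W Z) y ∘ Sum.inl) = _
  rw [eq_inv_mul_mulVec_of_mulVec_eq hY (reduced_normal_equations_leastSquares_fromCols hZ hD y),
    mulVec_mulVec]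
  simp only [Matrix.mul_assoc]

theorem least_squares_oblique_projection {N P L : ℕ}
    (W : Matrix (Fin N) (Fin P) ℝ) (Z : Matrix (Fin N) (Fin L) ℝ)
    (hW : Wᵀ * W = 1) (hZ : Zᵀ * Z = 1)
    (hrank : (fromCols W Z).rank = P + L)
    (hD : IsUnit ((fromCols W Z)ᵀ * fromCols W Z))
    (hY : IsUnit (Wᵀ * (1 - Z * Zᵀ) * W))
    (y : Fin N → ℝ) :
    W.mulVec (fun p : Fin P =>
        (((fromCols W Z)ᵀ * fromCols W Z)⁻¹ * (fromCols W Z)ᵀ).mulVec y (Sum.inl p)) =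
      (W * (Wᵀ * (1 - Z * Zᵀ) * W)⁻¹ * Wᵀ * (1 - Z * Zᵀ)).mulVec y :=
  least_squares_oblique_projection_general W Z hZ hD hY y
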